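/- Let m > 0, α > 0 and n ∈ ℕ. There exists a constant C = C(n,m) > 0 such that for every entire function Φ : ℂ³ → ℂ⁴, the function Ψ : M_ℂ → ℂ⁴ defined by Ψ(p) = ((p̸ + m)/(2m)) γ⁰ Φ(p⃗) for p = (p⁰, p⃗) ∈ M_ℂ satisfies ‖Ψ‖_{M,α,n} ≤ C · ‖Φ‖_{3,α,n}. -/

import Mathlib

/-! On the mass shell `|p⁰|² = |m² + p⃗·p⃗| ≤ m² + |p⃗|²`, so `|p| ≤ 2 max(m, |p⃗|)`. Each `γ^μ` is
unitary, so `|(p̸ + m)γ⁰ v| ≤ (4|p| + m)|v|`; hence pointwise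
`|p|ⁿ⁻¹ |Ψ(p)| ≤ 9·2ⁿ/(4m) · max(m, |p⃗|)ⁿ |Φ(p⃗)|`, and the weight `e^{-α|Im p⃗|}` is the same
on both sides. -/

open Matrix MeasureTheory
open scoped BigOperators Pointwise ComplexOrder ENNReal NNReal

noncomputable section

/-- Euclidean norm on `ℂ⁴`. -/
def enorm4 (p : Fin 4 → ℂ) : ℝ := Real.sqrt (∑ i, ‖p i‖ ^ 2)

/-- Euclidean norm on `ℂ³`. -/
def enorm3 (p : Fin 3 → ℂ) : ℝ := Real.sqrt (∑ i, ‖p i‖ ^ 2)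

/-- Euclidean norm of the (componentwise) imaginary part of a vector in `ℂ⁴`. -/
def imNorm4 (p : Fin 4 → ℂ) : ℝ := Real.sqrt (∑ i, (p i).im ^ 2)

/-- Euclidean norm of the (componentwise) imaginary part of a vector in `ℂ³`. -/
def imNorm3 (p : Fin 3 → ℂ) : ℝ := Real.sqrt (∑ i, (p i).im ^ 2)

/-- The spatial part `p⃗` of a four-vector `p = (p⁰, p⃗)`. -/
def spat (p : Fin 4 → ℂ) : Fin 3 → ℂ := fun i => p i.succ

/-- The complexified mass shell `M_ℂ = {p ∈ ℂ⁴ | (p⁰)² - (p¹)² - (p²)² - (p³)² = m²}`. -/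
def MassShellC (m : ℝ) : Set (Fin 4 → ℂ) :=
  {p | p 0 ^ 2 - p 1 ^ 2 - p 2 ^ 2 - p 3 ^ 2 = (m : ℂ) ^ 2}

/-- The Dirac gamma matrix `γ⁰` in the standard representation. -/
def γ0 : Matrix (Fin 4) (Fin 4) ℂ :=
  !![1, 0, 0, 0; 0, 1, 0, 0; 0, 0, -1, 0; 0, 0, 0, -1]

/-- The Dirac gamma matrix `γ¹`. -/
def γ1 : Matrix (Fin 4) (Fin 4) ℂ :=
  !![0, 0, 0, 1; 0, 0, 1, 0; 0, -1, 0, 0; -1, 0, 0, 0]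

/-- The Dirac gamma matrix `γ²`. -/
def γ2 : Matrix (Fin 4) (Fin 4) ℂ :=
  !![0, 0, 0, -Complex.I; 0, 0, Complex.I, 0; 0, Complex.I, 0, 0; -Complex.I, 0, 0, 0]

/-- The Dirac gamma matrix `γ³`. -/
def γ3 : Matrix (Fin 4) (Fin 4) ℂ :=
  !![0, 0, 1, 0; 0, 0, 0, -1; -1, 0, 0, 0; 0, 1, 0, 0]

/-- The family `μ ↦ γ^μ`. -/
def gam : Fin 4 → Matrix (Fin 4) (Fin 4) ℂ := ![γ0, γ1, γ2, γ3]

/-- Feynman slash of a four-vector (with upper indices):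
`p̸ = p⁰γ⁰ - p¹γ¹ - p²γ² - p³γ³`. -/
def slash (p : Fin 4 → ℂ) : Matrix (Fin 4) (Fin 4) ℂ :=
  p 0 • γ0 - p 1 • γ1 - p 2 • γ2 - p 3 • γ3

/-- Slash of a covector (lower indices): `A̸ = ∑ μ, A_μ γ^μ`. -/
def slashLow (a : Fin 4 → ℂ) : Matrix (Fin 4) (Fin 4) ℂ := ∑ μ, a μ • gam μ

/-- Complexification of a real four-vector. -/
def cv4 (p : Fin 4 → ℝ) : Fin 4 → ℂ := fun μ => (p μ : ℂ)

/-- The Paley-Wiener norm `‖Ψ‖_{M,α,n} = sup_{p ∈ M_ℂ} |p|^{n-1} e^{-α|Im p⃗|} |Ψ(p)|`,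
valued in `ℝ≥0∞`. -/
def normME (m α : ℝ) (n : ℕ) (Ψ : (Fin 4 → ℂ) → Fin 4 → ℂ) : ℝ≥0∞ :=
  ⨆ p : MassShellC m, ENNReal.ofReal
    (enorm4 (p : Fin 4 → ℂ) ^ (n - 1) * Real.exp (-α * imNorm3 (spat (p : Fin 4 → ℂ)))
      * enorm4 (Ψ (p : Fin 4 → ℂ)))

/-- The Paley-Wiener norm `‖Φ‖_{3,α,n} = sup_{p⃗ ∈ ℂ³} (m ∨ |p⃗|)ⁿ e^{-α|Im p⃗|} |Φ(p⃗)|`,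
valued in `ℝ≥0∞`. -/
def norm3E (m α : ℝ) (n : ℕ) (Φ : (Fin 3 → ℂ) → Fin 4 → ℂ) : ℝ≥0∞ :=
  ⨆ z : Fin 3 → ℂ, ENNReal.ofReal
    (max m (enorm3 z) ^ n * Real.exp (-α * imNorm3 z) * enorm4 (Φ z))

lemma enorm4_eq_norm (x : Fin 4 → ℂ) :
    enorm4 x = ‖(WithLp.toLp 2 x : EuclideanSpace ℂ (Fin 4))‖ := by
  simp [enorm4, EuclideanSpace.norm_eq]

lemma enorm4_nonneg (x : Fin 4 → ℂ) : 0 ≤ enorm4 x := Real.sqrt_nonneg _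

lemma enorm4_smul (c : ℂ) (x : Fin 4 → ℂ) : enorm4 (c • x) = ‖c‖ * enorm4 x := by
  simp only [enorm4_eq_norm, WithLp.toLp_smul, norm_smul]

lemma enorm4_add_le (x y : Fin 4 → ℂ) : enorm4 (x + y) ≤ enorm4 x + enorm4 y := by
  simpa only [enorm4_eq_norm, WithLp.toLp_add] using norm_add_le _ _

lemma enorm4_sub_le (x y : Fin 4 → ℂ) : enorm4 (x - y) ≤ enorm4 x + enorm4 y := by
  simpa only [enorm4_eq_norm, WithLp.toLp_sub] using norm_sub_le _ _

lemma norm_apply_le_enorm4 (x : Fin 4 → ℂ) (i : Fin 4) : ‖x i‖ ≤ enorm4 x := by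
  simpa only [enorm4_eq_norm] using PiLp.norm_apply_le (WithLp.toLp 2 x) i

lemma enorm4_gam_mulVec (μ : Fin 4) (v : Fin 4 → ℂ) : enorm4 (gam μ *ᵥ v) = enorm4 v := by
  unfold enorm4
  congr 1
  fin_cases μ <;>
    simp [gam, γ0, γ1, γ2, γ3, Fin.sum_univ_four, Matrix.mulVec, dotProduct] <;> ring

lemma slash_mulVec (p v : Fin 4 → ℂ) :
    slash p *ᵥ v = p 0 • (gam 0 *ᵥ v) - p 1 • (gam 1 *ᵥ v) - p 2 • (gam 2 *ᵥ v)
      - p 3 • (gam 3 *ᵥ v) := by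
  simp only [slash, Matrix.sub_mulVec, Matrix.smul_mulVec, gam]
  rfl

lemma enorm4_slash_mulVec_le (p v : Fin 4 → ℂ) :
    enorm4 (slash p *ᵥ v) ≤ 4 * enorm4 p * enorm4 v := by
  have h μ := mul_le_mul_of_nonneg_right (norm_apply_le_enorm4 p μ) (enorm4_nonneg v)
  rw [slash_mulVec]
  grw [enorm4_sub_le, enorm4_sub_le, enorm4_sub_le]
  simp only [enorm4_smul, enorm4_gam_mulVec]
  linarith [h 0, h 1, h 2, h 3]

lemma enorm4_sq (p : Fin 4 → ℂ) : enorm4 p ^ 2 = ‖p 0‖ ^ 2 + enorm3 (spat p) ^ 2 := by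
  rw [enorm4, enorm3, Real.sq_sqrt (by positivity), Real.sq_sqrt (by positivity),
    Fin.sum_univ_succ]
  rfl

lemma norm_sq_le_of_mem_massShellC {m : ℝ} {p : Fin 4 → ℂ} (hp : p ∈ MassShellC m) :
    ‖p 0‖ ^ 2 ≤ m ^ 2 + enorm3 (spat p) ^ 2 := by
  have hshell : p 0 ^ 2 - p 1 ^ 2 - p 2 ^ 2 - p 3 ^ 2 = (m : ℂ) ^ 2 := hp
  have hp0 : p 0 ^ 2 = (m : ℂ) ^ 2 + (p 1 ^ 2 + p 2 ^ 2 + p 3 ^ 2) := by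
    linear_combination hshell
  have hspat : enorm3 (spat p) ^ 2 = ‖p 1‖ ^ 2 + ‖p 2‖ ^ 2 + ‖p 3‖ ^ 2 := by
    rw [enorm3, Real.sq_sqrt (by positivity), Fin.sum_univ_three]
    rfl
  calc ‖p 0‖ ^ 2 = ‖(m : ℂ) ^ 2 + (p 1 ^ 2 + p 2 ^ 2 + p 3 ^ 2)‖ := by rw [← hp0, norm_pow]
    _ ≤ ‖(m : ℂ) ^ 2‖ + (‖p 1 ^ 2‖ + ‖p 2 ^ 2‖ + ‖p 3 ^ 2‖) := by
      grw [norm_add_le, norm_add₃_le]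
    _ = m ^ 2 + enorm3 (spat p) ^ 2 := by
      simp only [norm_pow, Complex.norm_real, Real.norm_eq_abs, sq_abs, hspat]

lemma enorm4_le_of_mem_massShellC {m : ℝ} (hm : 0 ≤ m) {p : Fin 4 → ℂ} (hp : p ∈ MassShellC m) :
    enorm4 p ≤ 2 * max m (enorm3 (spat p)) := by
  have hm' : m ^ 2 ≤ max m (enorm3 (spat p)) ^ 2 := pow_le_pow_left₀ hm (le_max_left _ _) 2
  have hz : enorm3 (spat p) ^ 2 ≤ max m (enorm3 (spat p)) ^ 2 :=
    pow_le_pow_left₀ (Real.sqrt_nonneg _) (le_max_right _ _) 2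
  refine le_of_sq_le_sq ?_ (by positivity)
  nlinarith [enorm4_sq p, norm_sq_le_of_mem_massShellC hp]

lemma enorm4_diracProjector_mulVec_le {m : ℝ} (hm : 0 ≤ m) (p v : Fin 4 → ℂ) :
    enorm4 ((2 * (m : ℂ))⁻¹ • (((slash p + (m : ℂ) • 1) * γ0) *ᵥ v)) ≤
      (2 * m)⁻¹ * (4 * enorm4 p + m) * enorm4 v := by
  have hγ0 : enorm4 (γ0 *ᵥ v) = enorm4 v := enorm4_gam_mulVec 0 v
  have hnorm : ‖(2 * (m : ℂ))⁻¹‖ = (2 * m)⁻¹ := by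
    rw [norm_inv, norm_mul, Complex.norm_real, Real.norm_of_nonneg hm, Complex.norm_ofNat]
  rw [enorm4_smul, hnorm, mul_assoc, ← Matrix.mulVec_mulVec, Matrix.add_mulVec,
    Matrix.smul_mulVec, Matrix.one_mulVec]
  gcongr
  calc enorm4 (slash p *ᵥ (γ0 *ᵥ v) + (m : ℂ) • (γ0 *ᵥ v))
      ≤ 4 * enorm4 p * enorm4 (γ0 *ᵥ v) + ‖(m : ℂ)‖ * enorm4 (γ0 *ᵥ v) := by
        grw [enorm4_add_le, enorm4_slash_mulVec_le, enorm4_smul]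
    _ = (4 * enorm4 p + m) * enorm4 v := by
        rw [hγ0, Complex.norm_real, Real.norm_of_nonneg hm]
        ring

lemma enorm4_pow_mul_diracProjector_mulVec_le {m : ℝ} (hm : 0 < m) {n : ℕ} (hn : n ≠ 0)
    {p : Fin 4 → ℂ} (hp : p ∈ MassShellC m) (v : Fin 4 → ℂ) :
    enorm4 p ^ (n - 1) * enorm4 ((2 * (m : ℂ))⁻¹ • (((slash p + (m : ℂ) • 1) * γ0) *ᵥ v)) ≤
      9 * 2 ^ n / (4 * m) * (max m (enorm3 (spat p)) ^ n * enorm4 v) := by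
  set M := max m (enorm3 (spat p))
  have hpM : enorm4 p ≤ 2 * M := enorm4_le_of_mem_massShellC hm.le hp
  have hmM : m ≤ M := le_max_left _ _
  have hp0 := enorm4_nonneg p
  have hv0 := enorm4_nonneg v
  calc enorm4 p ^ (n - 1) * enorm4 ((2 * (m : ℂ))⁻¹ • (((slash p + (m : ℂ) • 1) * γ0) *ᵥ v))
      ≤ enorm4 p ^ (n - 1) * ((2 * m)⁻¹ * (4 * enorm4 p + m) * enorm4 v) := by
        gcongr
        exact enorm4_diracProjector_mulVec_le hm.le p v
    _ ≤ (2 * M) ^ (n - 1) * ((2 * m)⁻¹ * (4 * (2 * M) + M) * enorm4 v) := by gcongr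
    _ = 9 * 2 ^ n / (4 * m) * (M ^ n * enorm4 v) := by
        rw [← pow_sub_one_mul hn (2 : ℝ), ← pow_sub_one_mul hn M, mul_pow]
        field_simp
        ring

lemma normME_le_mul_norm3E {m α C : ℝ} {n : ℕ} (hC : 0 ≤ C) {Ψ : (Fin 4 → ℂ) → Fin 4 → ℂ}
    {Φ : (Fin 3 → ℂ) → Fin 4 → ℂ}
    (h : ∀ p ∈ MassShellC m, enorm4 p ^ (n - 1) * enorm4 (Ψ p) ≤
      C * (max m (enorm3 (spat p)) ^ n * enorm4 (Φ (spat p)))) :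
    normME m α n Ψ ≤ ENNReal.ofReal C * norm3E m α n Φ := by
  refine iSup_le fun ⟨p, hp⟩ => ?_
  set E := Real.exp (-α * imNorm3 (spat p))
  calc ENNReal.ofReal (enorm4 p ^ (n - 1) * E * enorm4 (Ψ p))
      ≤ ENNReal.ofReal (C * (max m (enorm3 (spat p)) ^ n * E * enorm4 (Φ (spat p)))) := by
        refine ENNReal.ofReal_le_ofReal ?_
        calc enorm4 p ^ (n - 1) * E * enorm4 (Ψ p) = (enorm4 p ^ (n - 1) * enorm4 (Ψ p)) * E := by
              ring
          _ ≤ (C * (max m (enorm3 (spat p)) ^ n * enorm4 (Φ (spat p)))) * E :=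
              mul_le_mul_of_nonneg_right (h p hp) (Real.exp_pos _).le
          _ = C * (max m (enorm3 (spat p)) ^ n * E * enorm4 (Φ (spat p))) := by ring
    _ ≤ ENNReal.ofReal C * norm3E m α n Φ := by
        rw [ENNReal.ofReal_mul hC]
        gcongr
        exact le_iSup (fun z => ENNReal.ofReal
          (max m (enorm3 z) ^ n * Real.exp (-α * imNorm3 z) * enorm4 (Φ z))) (spat p)

theorem FM3_bound_general (m α : ℝ) (hm : 0 < m) (n : ℕ) (hn : 1 ≤ n) :
    ∃ C > 0, ∀ Φ : (Fin 3 → ℂ) → Fin 4 → ℂ, Differentiable ℂ Φ →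
      normME m α n
        (fun p => (2 * (m : ℂ))⁻¹ • (((slash p + (m : ℂ) • 1) * γ0) *ᵥ Φ (spat p))) ≤
      ENNReal.ofReal C * norm3E m α n Φ :=
  ⟨9 * 2 ^ n / (4 * m), by positivity, fun Φ _ => normME_le_mul_norm3E (by positivity)
    fun _ hp => enorm4_pow_mul_diracProjector_mulVec_le hm (by omega) hp _⟩

/-- Bound for `F_{M3}`: for every entire `Φ : ℂ³ → ℂ⁴` the function
`Ψ(p) = ((p̸+m)/(2m)) γ⁰ Φ(p⃗)` on `M_ℂ` satisfies `‖Ψ‖_{M,α,n} ≤ C ‖Φ‖_{3,α,n}`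
with `C = C(n,m)`. -/
theorem FM3_bound (m α : ℝ) (hm : 0 < m) (hα : 0 < α) (n : ℕ) (hn : 1 ≤ n) :
    ∃ C > 0, ∀ Φ : (Fin 3 → ℂ) → Fin 4 → ℂ, Differentiable ℂ Φ →
      normME m α n
        (fun p => (2 * (m : ℂ))⁻¹ • (((slash p + (m : ℂ) • 1) * γ0) *ᵥ Φ (spat p))) ≤
      ENNReal.ofReal C * norm3E m α n Φ :=
  FM3_bound_general m α hm n hn
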